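/- arXiv:1812.08640 — 4 statements merged into one kernel-verified Lean document; each statement's English description precedes it below -/
import Mathlib

section
/- Let P ⊆ ℝ^d be a full-dimensional polytope. Then P has a vertex-facet assignment if and only if for every face σ of P, the number of vertices of σ plus the number of facets of P containing σ is at most max{f_0(P), f_{d−1}(P)}, where f_0(P) is the number of vertices of P and f_{d−1}(P) is the number of facets of P. -/
/-- A polytope is the convex hull of a finite set of points. -/
def IsPolytope {V : Type*} [AddCommGroup V] [Module ℝ V] (P : Set V) : Prop :=
  ∃ S : Set V, S.Finite ∧ P = convexHull ℝ S

/-- A face of `Q` is a nonempty proper exposed face of `Q`. -/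
def IsFaceOf {V : Type*} [NormedAddCommGroup V] [NormedSpace ℝ V] (Q F : Set V) : Prop :=
  IsExposed ℝ Q F ∧ F.Nonempty ∧ F ≠ Q

/-- The dimension of a set: the dimension of its affine span. -/
noncomputable def polyDim {V : Type*} [NormedAddCommGroup V] [NormedSpace ℝ V]
    (Q : Set V) : ℕ :=
  Module.finrank ℝ (affineSpan ℝ Q).direction

/-- The facets of a full-dimensional polytope `P ⊆ V`: faces whose affine span has
dimension `dim V - 1`. -/
def ambientFacets {V : Type*} [NormedAddCommGroup V] [NormedSpace ℝ V]
    (P : Set V) : Set (Set V) :=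
  {F | IsFaceOf P F ∧ polyDim F = Module.finrank ℝ V - 1}

/-- A vertex-facet assignment: an injective map from vertices (extreme points) to
non-incident facets, or an injective map from facets to non-incident vertices. -/
def HasVFA {V : Type*} [NormedAddCommGroup V] [NormedSpace ℝ V] (P : Set V) : Prop :=
  (∃ f : (P.extremePoints ℝ) → (ambientFacets P), Function.Injective f ∧
      ∀ v, (v : V) ∉ (f v : Set V)) ∨
  (∃ g : (ambientFacets P) → (P.extremePoints ℝ), Function.Injective g ∧
      ∀ F : (ambientFacets P), (g F : V) ∉ (F : Set V))

/-!
Both directions are Hall's marriage theorem for the relation "v does not lie on F". An injective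
non-incident assignment of vertices to facets sends the vertices of a face σ to facets not
containing σ, which is the estimate (and dually for facets to vertices). Conversely, Hall's
condition can only fail on a set `s` of vertices and a nonempty set `t` of facets such that every
vertex in `s` lies on every facet in `t` and `#s + #t` exceeds the number of facets; then `⋂ t` is a
face σ whose vertices include `s` and whose containing facets include `t`, so the estimate for σ
is violated.
-/

open Set Function

theorem ncard_preimage_val {α : Type*} {s t : Set α} (h : t ⊆ s) :
    (Subtype.val ⁻¹' t : Set s).ncard = t.ncard :=
  ncard_preimage_of_injective_subset_range Subtype.val_injective (by simpa using h)

section Transversal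

variable {α β : Type*} {r : α → β → Prop}

theorem ncard_add_ncard_le_of_injective_not_rel [Finite β] {f : α → β} (hf : Injective f)
    (hfr : ∀ a, ¬ r a (f a)) {s : Set α} {t : Set β} (hst : ∀ a ∈ s, ∀ b ∈ t, r a b) :
    s.ncard + t.ncard ≤ Nat.card β := by
  have hsub : f '' s ⊆ tᶜ := by
    rintro _ ⟨a, ha, rfl⟩ hb
    exact hfr a (hst a ha _ hb)
  calc s.ncard + t.ncard = (f '' s).ncard + t.ncard := by rw [ncard_image_of_injective s hf]
    _ ≤ tᶜ.ncard + t.ncard := by grw [ncard_le_ncard hsub]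
    _ = Nat.card β := ncard_compl_add_ncard t

theorem exists_injective_not_rel [Finite α] [Finite β] (hcard : Nat.card α ≤ Nat.card β)
    (h : ∀ (s : Set α) (t : Set β), s.Nonempty → t.Nonempty → (∀ a ∈ s, ∀ b ∈ t, r a b) →
      s.ncard + t.ncard ≤ Nat.card β) :
    ∃ f : α → β, Injective f ∧ ∀ a, ¬ r a (f a) := by
  classical
  have := Fintype.ofFinite β
  refine (Fintype.all_card_le_filter_rel_iff_exists_injective (fun a b => ¬ r a b)).1 fun s => ?_
  set t : Set β := {b | ∀ a ∈ s, r a b}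
  have hcompl : (Finset.univ.filter fun b => ∃ a ∈ s, ¬ r a b).card = tᶜ.ncard := by
    rw [← ncard_coe_finset]
    congr 1
    ext b
    simp [t]
  rw [hcompl]
  rcases s.eq_empty_or_nonempty with rfl | hs
  · simp
  rcases t.eq_empty_or_nonempty with ht | ht
  · rw [ht, compl_empty, ncard_univ, ← ncard_coe_finset]
    exact (ncard_le_card _).trans hcard
  · have hbound := h s t (by simpa using hs) ht fun a ha b hb => hb a ha
    rw [ncard_coe_finset, ← ncard_add_ncard_compl t] at hbound
    omega

end Transversal

section Polytope

variable {V : Type*} [NormedAddCommGroup V] [NormedSpace ℝ V] {P σ : Set V}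

theorem IsPolytope.isCompact (hP : IsPolytope P) : IsCompact P := by
  obtain ⟨S, hS, rfl⟩ := hP
  exact hS.isCompact_convexHull ℝ

theorem IsPolytope.convex (hP : IsPolytope P) : Convex ℝ P := by
  obtain ⟨S, -, rfl⟩ := hP
  exact convex_convexHull ℝ S

theorem IsPolytope.finite_extremePoints (hP : IsPolytope P) : (P.extremePoints ℝ).Finite := by
  obtain ⟨S, hS, rfl⟩ := hP
  exact hS.subset extremePoints_convexHull_subset

theorem IsFaceOf.extremePoints_subset (hσ : IsFaceOf P σ) :
    σ.extremePoints ℝ ⊆ P.extremePoints ℝ :=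
  hσ.1.isExtreme.extremePoints_subset_extremePoints

theorem IsFaceOf.convexHull_extremePoints (hP : IsPolytope P) (hσ : IsFaceOf P σ) :
    convexHull ℝ (σ.extremePoints ℝ) = σ := by
  have hfin : (σ.extremePoints ℝ).Finite := hP.finite_extremePoints.subset hσ.extremePoints_subset
  rw [← (hfin.isCompact_convexHull ℝ).isClosed.closure_eq]
  exact closure_convexHull_extremePoints (hσ.1.isCompact hP.isCompact) (hσ.1.convex hP.convex)

theorem IsPolytope.finite_faces (hP : IsPolytope P) : {F : Set V | IsFaceOf P F}.Finite := by
  refine Finite.of_finite_image (f := fun F => F.extremePoints ℝ) ?_ fun F hF G hG hFG => ?_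
  · refine hP.finite_extremePoints.finite_subsets.subset ?_
    rintro _ ⟨F, hF, rfl⟩
    exact IsFaceOf.extremePoints_subset hF
  · rw [← IsFaceOf.convexHull_extremePoints hP hF, ← IsFaceOf.convexHull_extremePoints hP hG]
    exact congrArg (convexHull ℝ) hFG

theorem IsPolytope.finite_ambientFacets (hP : IsPolytope P) : (ambientFacets P).Finite :=
  hP.finite_faces.subset fun _ hF => hF.1

theorem isFaceOf_sInter {𝒜 : Set (Set V)} (hfin : 𝒜.Finite) (hne : 𝒜.Nonempty)
    (hface : ∀ F ∈ 𝒜, IsFaceOf P F) (hσ : (⋂₀ 𝒜).Nonempty) : IsFaceOf P (⋂₀ 𝒜) := by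
  have hexp : IsExposed ℝ P (⋂₀ 𝒜) := by
    simpa using IsExposed.sInter (F := hfin.toFinset) (by simpa using hne)
      fun F hF => (hface F (by simpa using hF)).1
  refine ⟨hexp, hσ, fun hP => ?_⟩
  obtain ⟨F, hF⟩ := hne
  exact (hface F hF).2.2 <| (hface F hF).1.subset.antisymm (hP ▸ sInter_subset_of_mem hF)

theorem IsPolytope.exists_face_of_forall_mem (hP : IsPolytope P)
    {s : Set (P.extremePoints ℝ)} {t : Set (ambientFacets P)} (hs : s.Nonempty)
    (ht : t.Nonempty) (hst : ∀ v ∈ s, ∀ F ∈ t, (v : V) ∈ (F : Set V)) :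
    ∃ σ, IsFaceOf P σ ∧
      s.ncard + t.ncard ≤ (σ.extremePoints ℝ).ncard + {F ∈ ambientFacets P | σ ⊆ F}.ncard := by
  set σ := ⋂₀ (Subtype.val '' t)
  have hsσ : ∀ v ∈ s, (v : V) ∈ σ := by
    rintro v hv _ ⟨F, hF, rfl⟩
    exact hst v hv F hF
  have hσ : IsFaceOf P σ :=
    isFaceOf_sInter (hP.finite_ambientFacets.subset (Subtype.coe_image_subset _ t)) (ht.image _)
      (by rintro _ ⟨F, -, rfl⟩; exact F.2.1) (hs.elim fun v hv => ⟨v, hsσ v hv⟩)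
  refine ⟨σ, hσ, add_le_add ?_ ?_⟩
  · rw [← ncard_image_of_injective s Subtype.val_injective]
    refine ncard_le_ncard ?_ (hP.finite_extremePoints.subset hσ.extremePoints_subset)
    rintro _ ⟨v, hv, rfl⟩
    exact inter_extremePoints_subset_extremePoints_of_subset hσ.1.subset ⟨hsσ v hv, v.2⟩
  · rw [← ncard_image_of_injective t Subtype.val_injective]
    refine ncard_le_ncard ?_ (hP.finite_ambientFacets.subset (sep_subset _ _))
    rintro _ ⟨F, hF, rfl⟩
    exact ⟨F.2, sInter_subset_of_mem ⟨F, hF, rfl⟩⟩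

theorem IsFaceOf.exists_forall_mem_and_ncard_eq (hσ : IsFaceOf P σ) :
    ∃ (s : Set (P.extremePoints ℝ)) (t : Set (ambientFacets P)),
      (∀ v ∈ s, ∀ F ∈ t, (v : V) ∈ (F : Set V)) ∧ s.ncard = (σ.extremePoints ℝ).ncard ∧
        t.ncard = {F ∈ ambientFacets P | σ ⊆ F}.ncard :=
  ⟨Subtype.val ⁻¹' σ.extremePoints ℝ, Subtype.val ⁻¹' {F ∈ ambientFacets P | σ ⊆ F},
    fun _ hv _ hF => hF.2 (_root_.extremePoints_subset hv),
    ncard_preimage_val hσ.extremePoints_subset, ncard_preimage_val (sep_subset _ _)⟩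

end Polytope

theorem vfa_iff_face_estimate_general {d : ℕ} (P : Set (Fin d → ℝ))
    (hP : IsPolytope P) :
    HasVFA P ↔ ∀ σ : Set (Fin d → ℝ), IsFaceOf P σ →
      (σ.extremePoints ℝ).ncard + {F ∈ ambientFacets P | σ ⊆ F}.ncard ≤
        max (P.extremePoints ℝ).ncard (ambientFacets P).ncard := by
  have := hP.finite_extremePoints.to_subtype
  have := hP.finite_ambientFacets.to_subtype
  let inc (v : P.extremePoints ℝ) (F : ambientFacets P) : Prop := (v : Fin d → ℝ) ∈ (F : Set _)
  constructor
  · rintro (⟨f, hf, hfv⟩ | ⟨g, hg, hgF⟩) σ hσ <;>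
      obtain ⟨s, t, hst, hs, ht⟩ := hσ.exists_forall_mem_and_ncard_eq <;> rw [← hs, ← ht]
    · exact (ncard_add_ncard_le_of_injective_not_rel (r := inc) hf hfv hst).trans (le_max_right _ _)
    · have hbound := ncard_add_ncard_le_of_injective_not_rel (r := flip inc) hg hgF
        fun F hF v hv => hst v hv F hF
      exact ((add_comm _ _).trans_le hbound).trans (le_max_left _ _)
  · intro h
    rcases le_total (P.extremePoints ℝ).ncard (ambientFacets P).ncard with hle | hle
    · refine Or.inl (exists_injective_not_rel (r := inc) hle fun s t hs ht hst => ?_)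
      obtain ⟨σ, hσ, hbound⟩ := hP.exists_face_of_forall_mem hs ht hst
      exact hbound.trans ((h σ hσ).trans (max_eq_right hle).le)
    · refine Or.inr (exists_injective_not_rel (r := flip inc) hle fun t s ht hs hts => ?_)
      obtain ⟨σ, hσ, hbound⟩ := hP.exists_face_of_forall_mem hs ht fun v hv F hF => hts F hF v hv
      exact ((add_comm _ _).trans_le hbound).trans ((h σ hσ).trans (max_eq_left hle).le)

/-- A full-dimensional polytope `P ⊆ ℝ^d` has a vertex-facet assignment
iff for every face `σ` of `P`, `f₀(σ)` plus the number of facets of `P` containing `σ`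
is at most `max {f₀(P), f_{d-1}(P)}`. -/
theorem vfa_iff_face_estimate {d : ℕ} (P : Set (Fin d → ℝ))
    (hP : IsPolytope P) (hfull : affineSpan ℝ P = ⊤) :
    HasVFA P ↔ ∀ σ : Set (Fin d → ℝ), IsFaceOf P σ →
      (σ.extremePoints ℝ).ncard + {F ∈ ambientFacets P | σ ⊆ F}.ncard ≤
        max (P.extremePoints ℝ).ncard (ambientFacets P).ncard :=
  vfa_iff_face_estimate_general P hP
end

section
/- For every integer d ≥ 7 there exists a full-dimensional polytope P ⊆ ℝ^d that does not have a vertex-facet assignment. -/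
/-!
The polytope is the join of a cube `C` (dimension `k`) and a cross-polytope `O` (dimension `m`)
placed in skew affine subspaces: the convex hull of `C × {0}` and `O × {1}`, of dimension
`k + m + 1`. A facet missing a cube vertex is the join of a cube facet with `O`, so the `2 ^ k`
cube vertices would have to be assigned injectively to the `2 * k` such facets; dually, the `2 ^ m`
facets `C ∗ G` (`G` a facet of `O`) contain all cube vertices, so they would have to be assigned
injectively to the `2 * m` vertices of `O`. Both fail once `k, m ≥ 3`; take `k = d - 4`, `m = 3`.

Facets are recognised by dimension only, through the fact that two linear functionals constant on
a set whose affine span has codimension one are proportional.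
-/

open Module Set

section LinearAlgebra

variable {K V : Type*} [Field K] [AddCommGroup V] [Module K V]

theorem vectorSpan_le_ker_of_forall_eq {T : Set V} {l : V →ₗ[K] K}
    (hl : ∀ p ∈ T, ∀ q ∈ T, l p = l q) : vectorSpan K T ≤ LinearMap.ker l := by
  rw [vectorSpan_def, Submodule.span_le]
  rintro _ ⟨p, hp, q, hq, rfl⟩
  simp [hl p hp q hq]

theorem mul_eq_mul_of_forall_eq_of_finrank_le [FiniteDimensional K V] {T : Set V}
    (hT : finrank K V ≤ finrank K (vectorSpan K T) + 1) {l μ : V →ₗ[K] K}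
    (hl : ∀ p ∈ T, ∀ q ∈ T, l p = l q) (hμ : ∀ p ∈ T, ∀ q ∈ T, μ p = μ q) (u w : V) :
    l u * μ w = l w * μ u := by
  by_contra hD
  replace hD : l u * μ w - l w * μ u ≠ 0 := sub_ne_zero.2 hD
  have hsurj : Function.Surjective (l.prod μ) := fun z =>
    ⟨(l u * μ w - l w * μ u)⁻¹ • ((z.1 * μ w - z.2 * l w) • u + (z.2 * l u - z.1 * μ u) • w), by
      ext <;> simp only [LinearMap.prod_apply, Function.prod, map_add, map_smul, smul_eq_mul,
        Prod.mk_add_mk, Prod.smul_mk] <;> rw [inv_mul_eq_iff_eq_mul₀ hD] <;> ring⟩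
  have hker : vectorSpan K T ≤ LinearMap.ker (l.prod μ) := by
    rw [LinearMap.ker_prod]
    exact le_inf (vectorSpan_le_ker_of_forall_eq hl) (vectorSpan_le_ker_of_forall_eq hμ)
  have hrank := LinearMap.finrank_range_add_finrank_ker (l.prod μ)
  rw [LinearMap.range_eq_top.2 hsurj, finrank_top, finrank_prod, finrank_self] at hrank
  have := Submodule.finrank_mono hker
  omega

theorem finrank_vectorSpan_lt_of_forall_eq [FiniteDimensional K V] {T : Set V}
    {l : V →ₗ[K] K} (hl : ∀ p ∈ T, ∀ q ∈ T, l p = l q) (hl0 : l ≠ 0) :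
    finrank K (vectorSpan K T) < finrank K V :=
  (Submodule.finrank_mono (vectorSpan_le_ker_of_forall_eq hl)).trans_lt
    (Submodule.finrank_lt (mt LinearMap.ker_eq_top.1 hl0))

theorem finrank_le_finrank_vectorSpan_add_one_of_affineSpan_insert_eq_top {T : Set V} {p : V}
    (h : affineSpan K (insert p T) = ⊤) : finrank K V ≤ finrank K (vectorSpan K T) + 1 := by
  have := finrank_vectorSpan_insert_le_set K T p
  rwa [← direction_affineSpan, h, AffineSubspace.direction_top, finrank_top] at this

end LinearAlgebra

theorem forall_mem_convexHull_le {V : Type*} [AddCommGroup V] [Module ℝ V] {S : Set V}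
    {l : V →ₗ[ℝ] ℝ} {c : ℝ} (h : ∀ v ∈ S, l v ≤ c) : ∀ y ∈ convexHull ℝ S, l y ≤ c :=
  fun _ hy => convexHull_min h (convex_halfSpace_le l.isLinear c) hy

section Normed

variable {E : Type*} [NormedAddCommGroup E] [NormedSpace ℝ E]

theorem IsExposed.eq_convexHull_inter {S F : Set E} (hS : S.Finite)
    (hF : IsExposed ℝ (convexHull ℝ S) F) : F = convexHull ℝ (F ∩ S) := by
  have hconv := hF.convex (convex_convexHull ℝ S)
  refine Subset.antisymm ?_ (convexHull_min inter_subset_left hconv)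
  calc F = closure (convexHull ℝ (F.extremePoints ℝ)) :=
        (closure_convexHull_extremePoints (hF.isCompact (hS.isCompact_convexHull ℝ)) hconv).symm
    _ ⊆ closure (convexHull ℝ (F ∩ S)) := closure_mono <| convexHull_mono fun x hx =>
        ⟨hx.1, extremePoints_convexHull_subset (hF.isExtreme.extremePoints_subset_extremePoints hx)⟩
    _ = convexHull ℝ (F ∩ S) :=
        ((hS.subset inter_subset_right).isCompact_convexHull ℝ).isClosed.closure_eq

theorem finrank_le_finrank_vectorSpan_inter_add_one {S F : Set E} (hS : S.Finite)
    (hF : F ∈ ambientFacets (convexHull ℝ S)) :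
    finrank ℝ E ≤ finrank ℝ (vectorSpan ℝ (F ∩ S)) + 1 := by
  obtain ⟨⟨hexp, -, -⟩, hdim⟩ := hF
  rw [polyDim, hexp.eq_convexHull_inter hS, affineSpan_convexHull, direction_affineSpan] at hdim
  omega

end Normed

theorem two_mul_lt_two_pow {n : ℕ} (hn : 3 ≤ n) : 2 * n < 2 ^ n := by
  induction n, hn using Nat.le_induction with
  | base => norm_num
  | succ n hn ih => rw [pow_succ]; omega

namespace CubeCrossJoin

-- `b (.inl i)` span the cube, `b (.inr (.inl j))` the cross-polytope, `b (.inr (.inr ()))` is the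
-- height separating them; cube vertices are indexed by subsets of `ι`.
variable {ι κ E : Type*} [NormedAddCommGroup E] [NormedSpace ℝ E]
  (b : Basis (ι ⊕ κ ⊕ Unit) ℝ E)

noncomputable section

def cubeVertex (A : Finset ι) : E := ∑ i ∈ A, b (.inl i)

def crossVertex (j : κ) (s : Bool) : E :=
  (if s then 1 else -1 : ℝ) • b (.inr (.inl j)) + b (.inr (.inr ()))

def vertices : Set E := range (cubeVertex b) ∪ range (Function.uncurry (crossVertex b))

def polytope : Set E := convexHull ℝ (vertices b)

def face (l : E →ₗ[ℝ] ℝ) : Set E := {x ∈ polytope b | ∀ y ∈ polytope b, l y ≤ l x}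

theorem map_cubeVertex (l : E →ₗ[ℝ] ℝ) (A : Finset ι) :
    l (cubeVertex b A) = ∑ i ∈ A, l (b (.inl i)) :=
  map_sum l _ A

@[simp]
theorem repr_cubeVertex_inl [DecidableEq ι] (i : ι) (A : Finset ι) :
    b.repr (cubeVertex b A) (.inl i) = if i ∈ A then 1 else 0 := by
  classical
  rw [← Basis.coord_apply, map_cubeVertex]
  simp [Finsupp.single_apply]

@[simp]
theorem repr_cubeVertex_inr (m : κ ⊕ Unit) (A : Finset ι) :
    b.repr (cubeVertex b A) (.inr m) = 0 := by
  rw [← Basis.coord_apply, map_cubeVertex]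
  simp

@[simp]
theorem repr_crossVertex_inl (i : ι) (j : κ) (s : Bool) :
    b.repr (crossVertex b j s) (.inl i) = 0 := by
  rw [← Basis.coord_apply, crossVertex, map_add, map_smul]
  simp

@[simp]
theorem repr_crossVertex_inr_inl [DecidableEq κ] (j' j : κ) (s : Bool) :
    b.repr (crossVertex b j s) (.inr (.inl j')) = if j = j' then (if s then 1 else -1) else 0 := by
  rw [← Basis.coord_apply, crossVertex, map_add, map_smul]
  cases s <;> by_cases h : j = j' <;> simp [h]

@[simp]
theorem repr_crossVertex_apex (j : κ) (s : Bool) :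
    b.repr (crossVertex b j s) (.inr (.inr ())) = 1 := by
  rw [← Basis.coord_apply, crossVertex, map_add, map_smul]
  simp

theorem cubeVertex_injective : Function.Injective (cubeVertex b) := fun A B h =>
  Finset.ext fun i => by
    classical
    have := congrArg (fun x => b.repr x (.inl i)) h
    simp only [repr_cubeVertex_inl] at this
    split_ifs at this <;> simp_all

theorem cubeVertex_mem_polytope (A : Finset ι) : cubeVertex b A ∈ polytope b :=
  subset_convexHull ℝ _ (Or.inl ⟨A, rfl⟩)

theorem crossVertex_mem_polytope (j : κ) (s : Bool) : crossVertex b j s ∈ polytope b :=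
  subset_convexHull ℝ _ (Or.inr ⟨(j, s), rfl⟩)

theorem vertices_finite [Finite ι] [Finite κ] : (vertices b).Finite :=
  (finite_range _).union (finite_range _)

theorem isPolytope_polytope [Finite ι] [Finite κ] : IsPolytope (polytope b) :=
  ⟨vertices b, vertices_finite b, rfl⟩

theorem crossVertex_add_crossVertex_not (j : κ) (s : Bool) :
    crossVertex b j s + crossVertex b j (!s) = (2 : ℝ) • b (.inr (.inr ())) := by
  cases s <;>
    simp only [crossVertex, Bool.not_false, Bool.not_true, Bool.false_eq_true, ↓reduceIte] <;>
    module

theorem affineSpan_vertices [Nonempty κ] : affineSpan ℝ (vertices b) = ⊤ := by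
  obtain ⟨j⟩ := ‹Nonempty κ›
  have hcube (A : Finset ι) : cubeVertex b A ∈ vertices b := Or.inl ⟨A, rfl⟩
  have hcross (j : κ) (s : Bool) : crossVertex b j s ∈ vertices b := Or.inr ⟨(j, s), rfl⟩
  have hzero : cubeVertex b ∅ = 0 := Finset.sum_empty
  rw [AffineSubspace.affineSpan_eq_top_iff_vectorSpan_eq_top_of_nonempty ℝ E E ⟨_, hcube ∅⟩,
    eq_top_iff, ← b.span_eq, Submodule.span_le]
  rintro _ ⟨i | j' | ⟨⟩, rfl⟩
  · have := vsub_mem_vectorSpan ℝ (hcube {i}) (hcube ∅)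
    simpa [hzero, cubeVertex] using this
  · have hdiff : b (.inr (.inl j')) =
        (1 / 2 : ℝ) • (crossVertex b j' true -ᵥ crossVertex b j' false) := by
      simp only [crossVertex, vsub_eq_sub, Bool.false_eq_true, ↓reduceIte]
      module
    rw [SetLike.mem_coe, hdiff]
    exact Submodule.smul_mem _ _ (vsub_mem_vectorSpan ℝ (hcross j' true) (hcross j' false))
  · have hsum := crossVertex_add_crossVertex_not b j true
    have := Submodule.smul_mem _ (1 / 2 : ℝ) (Submodule.add_mem _
      (vsub_mem_vectorSpan ℝ (hcross j true) (hcube ∅))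
      (vsub_mem_vectorSpan ℝ (hcross j false) (hcube ∅)))
    rw [Bool.not_true] at hsum
    rw [hzero, vsub_eq_sub, vsub_eq_sub, sub_zero, sub_zero, hsum, smul_smul] at this
    simpa using this

theorem affineSpan_polytope [Nonempty κ] : affineSpan ℝ (polytope b) = ⊤ := by
  rw [polytope, affineSpan_convexHull, affineSpan_vertices]

theorem mem_face_iff {l : E →ₗ[ℝ] ℝ} {x : E} :
    x ∈ face b l ↔ x ∈ polytope b ∧ ∀ v ∈ vertices b, l v ≤ l x :=
  and_congr_right fun _ =>
    ⟨fun h v hv => h v (subset_convexHull ℝ _ hv), forall_mem_convexHull_le⟩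

-- Exposes the join of the cube facet `{xᵢ = 1}` (for `true`) or `{xᵢ = 0}` (for `false`) with the
-- cross-polytope.
def cubeFacetFunctional (i : ι) : Bool → E →ₗ[ℝ] ℝ
  | true => b.coord (.inl i) + b.coord (.inr (.inr ()))
  | false => -b.coord (.inl i)

theorem face_smul {c : ℝ} (hc : 0 < c) (l : E →ₗ[ℝ] ℝ) : face b (c • l) = face b l := by
  ext x
  simp [face, mul_le_mul_iff_right₀ hc]

theorem mem_iff_of_cubeVertex_mem_face {l : E →ₗ[ℝ] ℝ} {B : Finset ι}
    (hB : cubeVertex b B ∈ face b l) {i : ι} (hi : l (b (.inl i)) ≠ 0) :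
    i ∈ B ↔ 0 < l (b (.inl i)) := by
  classical
  constructor
  · intro hiB
    have := hB.2 _ (cubeVertex_mem_polytope b (B.erase i))
    rw [map_cubeVertex, map_cubeVertex, ← Finset.add_sum_erase B _ hiB] at this
    exact lt_of_le_of_ne (by linarith) hi.symm
  · intro ha
    by_contra hiB
    have := hB.2 _ (cubeVertex_mem_polytope b (insert i B))
    rw [map_cubeVertex, map_cubeVertex, Finset.sum_insert hiB] at this
    linarith

variable [Fintype κ]

-- Exposes the join of the cube with the facet of the cross-polytope through the vertices
-- `crossVertex b j (s j)`.
def crossFacetFunctional (s : κ → Bool) : E →ₗ[ℝ] ℝ :=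
  ∑ j, (if s j then 1 else -1 : ℝ) • b.coord (.inr (.inl j)) - b.coord (.inr (.inr ()))

theorem crossFacetFunctional_cubeVertex (s : κ → Bool) (A : Finset ι) :
    crossFacetFunctional b s (cubeVertex b A) = 0 := by
  simp only [crossFacetFunctional, LinearMap.sub_apply, LinearMap.sum_apply, LinearMap.smul_apply,
    Basis.coord_apply, repr_cubeVertex_inr, smul_zero, Finset.sum_const_zero, sub_self]

theorem crossFacetFunctional_crossVertex (s : κ → Bool) (j : κ) (v : Bool) :
    crossFacetFunctional b s (crossVertex b j v) = if v = s j then 0 else -2 := by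
  classical
  simp only [crossFacetFunctional, LinearMap.sub_apply, LinearMap.sum_apply, LinearMap.smul_apply,
    Basis.coord_apply, repr_crossVertex_inr_inl, repr_crossVertex_apex, smul_eq_mul, mul_ite,
    mul_zero, Finset.sum_ite_eq, Finset.mem_univ, if_true]
  cases v <;> cases s j <;> norm_num

theorem crossFacetFunctional_le_zero (s : κ → Bool) :
    ∀ v ∈ vertices b, crossFacetFunctional b s v ≤ 0 := by
  rintro _ (⟨A, rfl⟩ | ⟨⟨j, v⟩, rfl⟩)
  · rw [crossFacetFunctional_cubeVertex]
  · rw [Function.uncurry_apply_pair, crossFacetFunctional_crossVertex]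
    split_ifs <;> norm_num

theorem cubeVertex_mem_face_crossFacetFunctional (s : κ → Bool) (A : Finset ι) :
    cubeVertex b A ∈ face b (crossFacetFunctional b s) :=
  (mem_face_iff b).2 ⟨cubeVertex_mem_polytope b A, by
    simpa [crossFacetFunctional_cubeVertex] using crossFacetFunctional_le_zero b s⟩

theorem crossVertex_mem_face_crossFacetFunctional_iff (s : κ → Bool) (j : κ) (v : Bool) :
    crossVertex b j v ∈ face b (crossFacetFunctional b s) ↔ v = s j := by
  refine ⟨fun h => by_contra fun hv => ?_, ?_⟩
  · have := h.2 _ (cubeVertex_mem_polytope b ∅)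
    rw [crossFacetFunctional_cubeVertex, crossFacetFunctional_crossVertex, if_neg hv] at this
    norm_num at this
  · rintro rfl
    refine (mem_face_iff b).2 ⟨crossVertex_mem_polytope b j _, fun w hw => ?_⟩
    rw [crossFacetFunctional_crossVertex, if_pos rfl]
    exact crossFacetFunctional_le_zero b s w hw

theorem face_crossFacetFunctional_injective :
    Function.Injective fun s => face b (crossFacetFunctional b s) := by
  intro s s' h
  funext j
  rw [← crossVertex_mem_face_crossFacetFunctional_iff b s', ← show face b _ = face b _ from h,
    crossVertex_mem_face_crossFacetFunctional_iff]

theorem crossFacetFunctional_eq_zero_of_mem_face {s : κ → Bool} {x : E}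
    (hx : x ∈ face b (crossFacetFunctional b s)) : crossFacetFunctional b s x = 0 :=
  le_antisymm (forall_mem_convexHull_le (crossFacetFunctional_le_zero b s) x hx.1)
    (by simpa [crossFacetFunctional_cubeVertex] using hx.2 _ (cubeVertex_mem_polytope b ∅))

-- Opposite cross-polytope vertices share their midpoint, so one vertex off the facet recovers all
-- the others.
theorem affineSpan_insert_face_crossFacetFunctional (s : κ → Bool) (j₀ : κ) :
    affineSpan ℝ (insert (crossVertex b j₀ (!s j₀)) (face b (crossFacetFunctional b s))) = ⊤ := by
  have : Nonempty κ := ⟨j₀⟩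
  set S := affineSpan ℝ (insert (crossVertex b j₀ (!s j₀)) (face b (crossFacetFunctional b s)))
  refine eq_top_iff.2 (affineSpan_vertices b ▸ affineSpan_le.2 ?_)
  have hface : face b (crossFacetFunctional b s) ⊆ S :=
    fun x hx => subset_affineSpan ℝ _ (mem_insert_of_mem _ hx)
  have hmem (j : κ) := hface ((crossVertex_mem_face_crossFacetFunctional_iff b s j _).2 rfl)
  rintro _ (⟨A, rfl⟩ | ⟨⟨j, v⟩, rfl⟩)
  · exact hface (cubeVertex_mem_face_crossFacetFunctional b s A)
  obtain rfl | rfl : v = s j ∨ v = !s j := by cases v <;> cases s j <;> simp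
  · exact hmem j
  have heq : crossVertex b j (!s j) =
      (crossVertex b j₀ (s j₀) -ᵥ crossVertex b j (s j)) +ᵥ crossVertex b j₀ (!s j₀) := by
    rw [vsub_eq_sub, vadd_eq_add]
    linear_combination (norm := module)
      crossVertex_add_crossVertex_not b j (s j) - crossVertex_add_crossVertex_not b j₀ (s j₀)
  rw [Function.uncurry_apply_pair, heq]
  exact AffineSubspace.vadd_mem_of_mem_direction
    (AffineSubspace.vsub_mem_direction (hmem j₀) (hmem j)) (subset_affineSpan ℝ _ (mem_insert _ _))

variable [Fintype ι]

theorem isExposed_face (l : E →ₗ[ℝ] ℝ) : IsExposed ℝ (polytope b) (face b l) := by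
  have := Module.Finite.of_basis b
  exact fun _ => ⟨LinearMap.toContinuousLinearMap l, rfl⟩

theorem face_eq_convexHull_inter (l : E →ₗ[ℝ] ℝ) :
    face b l = convexHull ℝ (face b l ∩ vertices b) :=
  (isExposed_face b l).eq_convexHull_inter (vertices_finite b)

theorem mem_extremePoints_of_forall_lt {l : E →ₗ[ℝ] ℝ} {p : E} (hp : p ∈ vertices b)
    (h : ∀ v ∈ vertices b, v ≠ p → l v < l p) : p ∈ (polytope b).extremePoints ℝ := by
  have hpF : p ∈ face b l := (mem_face_iff b).2 ⟨subset_convexHull ℝ _ hp,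
    fun v hv => (eq_or_ne v p).elim (fun hvp => hvp ▸ le_rfl) fun hvp => (h v hv hvp).le⟩
  have hface : face b l = {p} := by
    rw [face_eq_convexHull_inter, ← convexHull_singleton (𝕜 := ℝ)]
    congr 1
    refine Subset.antisymm (fun v ⟨hvF, hv⟩ => by_contra fun hvp => ?_)
      (singleton_subset_iff.2 ⟨hpF, hp⟩)
    exact (h v hv hvp).not_ge (hvF.2 _ (subset_convexHull ℝ _ hp))
  exact (hface ▸ isExposed_face b l).isExtreme.mem_extremePoints

theorem cubeVertex_mem_extremePoints (A : Finset ι) :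
    cubeVertex b A ∈ (polytope b).extremePoints ℝ := by
  classical
  set l : E →ₗ[ℝ] ℝ := ∑ i, (if i ∈ A then 1 else -1 : ℝ) • b.coord (.inl i)
    - (Fintype.card ι + 1 : ℝ) • b.coord (.inr (.inr ()))
  have hcube (B : Finset ι) :
      l (cubeVertex b B) = ∑ i, (if i ∈ A then 1 else -1) * (if i ∈ B then 1 else 0) := by
    simp only [l, LinearMap.sub_apply, LinearMap.sum_apply, LinearMap.smul_apply,
      smul_eq_mul, Basis.coord_apply, repr_cubeVertex_inl, repr_cubeVertex_inr, mul_zero, sub_zero]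
  refine mem_extremePoints_of_forall_lt b (l := l) (Or.inl ⟨A, rfl⟩) ?_
  rintro _ (⟨B, rfl⟩ | ⟨⟨j, s⟩, rfl⟩) hne
  · obtain ⟨i, hi⟩ : ∃ i, ¬(i ∈ B ↔ i ∈ A) := by
      by_contra! h
      exact hne (congrArg _ (Finset.ext h))
    rw [hcube, hcube]
    refine Finset.sum_lt_sum (fun i _ => ?_) ⟨i, Finset.mem_univ i, ?_⟩ <;>
      split_ifs <;> simp_all
  · have : 0 ≤ l (cubeVertex b A) := by
      rw [hcube]
      exact Finset.sum_nonneg fun i _ => by split_ifs <;> norm_num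
    have hcross : l (crossVertex b j s) = -(Fintype.card ι + 1) := by
      simp only [l, LinearMap.sub_apply, LinearMap.sum_apply, LinearMap.smul_apply, smul_eq_mul,
        Basis.coord_apply, repr_crossVertex_inl, repr_crossVertex_apex, mul_zero,
        Finset.sum_const_zero, mul_one, zero_sub]
    rw [Function.uncurry_apply_pair, hcross]
    linarith [(Fintype.card ι).cast_nonneg (α := ℝ)]

theorem exists_coord_ne_zero_of_cubeVertex_not_mem_face [Nonempty ι] {l : E →ₗ[ℝ] ℝ}
    (hT : finrank ℝ E ≤ finrank ℝ (vectorSpan ℝ (face b l ∩ vertices b)) + 1)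
    {A : Finset ι} (hA : cubeVertex b A ∉ face b l) : ∃ i, l (b (.inl i)) ≠ 0 := by
  have := Module.Finite.of_basis b
  by_contra! h
  have hcross : ∀ p ∈ face b l ∩ vertices b, ∃ j v, p = crossVertex b j v := by
    rintro _ ⟨hp, ⟨B, rfl⟩ | ⟨⟨j, v⟩, rfl⟩⟩
    · refine absurd ⟨cubeVertex_mem_polytope b A, fun y hy => (hp.2 y hy).trans ?_⟩ hA
      simp [map_cubeVertex, h]
    · exact ⟨j, v, rfl⟩
  obtain ⟨i⟩ := ‹Nonempty ι›
  have := mul_eq_mul_of_forall_eq_of_finrank_le hT (l := b.coord (.inl i))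
    (μ := b.coord (.inr (.inr ()))) ?_ ?_ (b (.inl i)) (b (.inr (.inr ())))
  · simp at this
  all_goals
    intro p hp q hq
    obtain ⟨j, v, rfl⟩ := hcross p hp
    obtain ⟨j', v', rfl⟩ := hcross q hq
    simp

theorem face_eq_face_cubeFacetFunctional {l : E →ₗ[ℝ] ℝ}
    (hT : finrank ℝ E ≤ finrank ℝ (vectorSpan ℝ (face b l ∩ vertices b)) + 1)
    {i : ι} (hi : l (b (.inl i)) ≠ 0) :
    face b l = face b (cubeFacetFunctional b i (decide (0 < l (b (.inl i))))) := by
  classical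
  have := Module.Finite.of_basis b
  set ν := cubeFacetFunctional b i (decide (0 < l (b (.inl i))))
  have hl : ∀ p ∈ face b l ∩ vertices b, ∀ q ∈ face b l ∩ vertices b, l p = l q :=
    fun p hp q hq => le_antisymm (hq.1.2 p hp.1.1) (hp.1.2 q hq.1.1)
  -- maximality pins the `i`-th coordinate of the cube vertices on the face, so `ν` is constant
  -- there, and by rigidity `l` is a positive multiple of `ν`
  have hν : ∀ p ∈ face b l ∩ vertices b, ν p = if 0 < l (b (.inl i)) then 1 else 0 := by
    rintro _ ⟨hp, ⟨B, rfl⟩ | ⟨⟨j, v⟩, rfl⟩⟩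
    · have hiB := mem_iff_of_cubeVertex_mem_face b hp hi
      by_cases ha : 0 < l (b (.inl i))
      · simp [ν, cubeFacetFunctional, ha, hiB.2 ha]
      · simp [ν, cubeFacetFunctional, ha, mt hiB.1 ha]
    · by_cases ha : 0 < l (b (.inl i)) <;> simp [ν, cubeFacetFunctional, ha]
  have hrig := mul_eq_mul_of_forall_eq_of_finrank_le hT hl
    (fun p hp q hq => (hν p hp).trans (hν q hq).symm)
  have hsq : ν (b (.inl i)) * ν (b (.inl i)) = 1 := by
    by_cases ha : 0 < l (b (.inl i)) <;> simp [ν, cubeFacetFunctional, ha]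
  have hpos : 0 < l (b (.inl i)) * ν (b (.inl i)) := by
    rcases hi.lt_or_gt with ha | ha <;> simp [ν, cubeFacetFunctional, ha, ha.not_gt]
  have hscale : l = (l (b (.inl i)) * ν (b (.inl i))) • ν := LinearMap.ext fun u => by
    rw [LinearMap.smul_apply, smul_eq_mul]
    linear_combination (ν (b (.inl i))) * hrig u (b (.inl i)) - l u * hsq
  conv_lhs => rw [hscale]
  exact face_smul b hpos ν

theorem exists_eq_face_cubeFacetFunctional [Nonempty ι] {F : Set E}
    (hF : F ∈ ambientFacets (polytope b)) {A : Finset ι} (hA : cubeVertex b A ∉ F) :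
    ∃ i ε, F = face b (cubeFacetFunctional b i ε) := by
  have hT := finrank_le_finrank_vectorSpan_inter_add_one (vertices_finite b) hF
  obtain ⟨l, rfl⟩ := hF.1.1 hF.1.2.1
  obtain ⟨i, hi⟩ := exists_coord_ne_zero_of_cubeVertex_not_mem_face b (l := l) hT hA
  exact ⟨i, _, face_eq_face_cubeFacetFunctional b hT hi⟩

theorem face_crossFacetFunctional_mem_ambientFacets [Nonempty κ] (s : κ → Bool) :
    face b (crossFacetFunctional b s) ∈ ambientFacets (polytope b) := by
  have := Module.Finite.of_basis b
  obtain ⟨j₀⟩ := ‹Nonempty κ›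
  refine ⟨⟨isExposed_face b _, ⟨_, cubeVertex_mem_face_crossFacetFunctional b s ∅⟩, fun h => ?_⟩,
    ?_⟩
  · have := (crossVertex_mem_face_crossFacetFunctional_iff b s j₀ (!s j₀)).1
      (h ▸ crossVertex_mem_polytope b j₀ _)
    simp at this
  · have hne : crossFacetFunctional b s ≠ 0 := fun h0 => by
      have := LinearMap.congr_fun h0 (b (.inr (.inr ())))
      simp only [crossFacetFunctional, LinearMap.sub_apply, LinearMap.sum_apply,
        LinearMap.smul_apply, Basis.coord_apply, Basis.repr_self] at this
      simp at this
    have hlt := finrank_vectorSpan_lt_of_forall_eq (fun p hp q hq =>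
      (crossFacetFunctional_eq_zero_of_mem_face b hp).trans
        (crossFacetFunctional_eq_zero_of_mem_face b hq).symm) hne
    have hge := finrank_le_finrank_vectorSpan_add_one_of_affineSpan_insert_eq_top
      (affineSpan_insert_face_crossFacetFunctional b s j₀)
    rw [polyDim, direction_affineSpan]
    omega

theorem not_exists_injective_extremePoints_to_ambientFacets (hι : 3 ≤ Fintype.card ι) :
    ¬∃ f : (polytope b).extremePoints ℝ → ambientFacets (polytope b),
      Function.Injective f ∧ ∀ v, (v : E) ∉ (f v : Set E) := by
  have : Nonempty ι := Fintype.card_pos_iff.1 (by omega)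
  rintro ⟨f, hf, hfv⟩
  let v (A : Finset ι) : (polytope b).extremePoints ℝ :=
    ⟨cubeVertex b A, cubeVertex_mem_extremePoints b A⟩
  have key (A : Finset ι) :
      ∃ p : ι × Bool, (f (v A) : Set E) = face b (cubeFacetFunctional b p.1 p.2) :=
    let ⟨i, ε, h⟩ := exists_eq_face_cubeFacetFunctional b (f (v A)).2 (hfv (v A))
    ⟨(i, ε), h⟩
  choose Φ hΦ using key
  have hΦ : Function.Injective Φ := fun A B h => cubeVertex_injective b <|
    congrArg Subtype.val (@hf (v A) (v B) (Subtype.ext (by rw [hΦ, hΦ, h])))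
  have := Fintype.card_le_of_injective Φ hΦ
  rw [Fintype.card_finset, Fintype.card_prod, Fintype.card_bool] at this
  linarith [two_mul_lt_two_pow hι]

theorem not_exists_injective_ambientFacets_to_extremePoints (hκ : 3 ≤ Fintype.card κ) :
    ¬∃ g : ambientFacets (polytope b) → (polytope b).extremePoints ℝ,
      Function.Injective g ∧ ∀ F : ambientFacets (polytope b), (g F : E) ∉ (F : Set E) := by
  classical
  have : Nonempty κ := Fintype.card_pos_iff.1 (by omega)
  rintro ⟨g, hg, hgF⟩
  let G (s : κ → Bool) : ambientFacets (polytope b) :=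
    ⟨_, face_crossFacetFunctional_mem_ambientFacets b s⟩
  have key (s : κ → Bool) : ∃ p : κ × Bool, (g (G s) : E) = crossVertex b p.1 p.2 := by
    rcases extremePoints_convexHull_subset (g (G s)).2 with ⟨A, hA⟩ | ⟨p, hp⟩
    · exact absurd (hA ▸ cubeVertex_mem_face_crossFacetFunctional b s A) (hgF (G s))
    · exact ⟨p, hp.symm⟩
  choose Ψ hΨ using key
  have hΨ : Function.Injective Ψ := fun s s' h => face_crossFacetFunctional_injective b <|
    congrArg Subtype.val (@hg (G s) (G s') (Subtype.ext (by rw [hΨ, hΨ, h])))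
  have := Fintype.card_le_of_injective Ψ hΨ
  rw [Fintype.card_fun, Fintype.card_prod, Fintype.card_bool] at this
  linarith [two_mul_lt_two_pow hκ]

theorem not_hasVFA_polytope (hι : 3 ≤ Fintype.card ι) (hκ : 3 ≤ Fintype.card κ) :
    ¬HasVFA (polytope b) := by
  rintro (h | h)
  exacts [not_exists_injective_extremePoints_to_ambientFacets b hι h,
    not_exists_injective_ambientFacets_to_extremePoints b hκ h]

end

end CubeCrossJoin

/-- For every `d ≥ 7` there is a full-dimensional polytope `P ⊆ ℝ^d`
without a vertex-facet assignment. -/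
theorem exists_no_vfa_of_dim_ge_seven (d : ℕ) (hd : 7 ≤ d) :
    ∃ P : Set (Fin d → ℝ), IsPolytope P ∧ affineSpan ℝ P = ⊤ ∧ ¬ HasVFA P := by
  let e : Fin d ≃ Fin (d - 4) ⊕ Fin 3 ⊕ Unit := Fintype.equivOfCardEq (by simp; omega)
  let b := (Pi.basisFun ℝ (Fin d)).reindex e
  exact ⟨CubeCrossJoin.polytope b, CubeCrossJoin.isPolytope_polytope b,
    CubeCrossJoin.affineSpan_polytope b,
    CubeCrossJoin.not_hasVFA_polytope b (by simp; omega) (by simp)⟩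
end

section
/- For every integer j ≥ 3, the free join of the j-dimensional cube [0,1]^j ⊆ ℝ^j and the j-dimensional cross-polytope conv{±e_1, …, ±e_j} ⊆ ℝ^j is a full-dimensional polytope in ℝ^{2j+1} that does not have a vertex-facet assignment. -/
/-- Embedding of the first factor `ℝ^{d₁}` into `ℝ^{d₁} × ℝ^{d₂} × ℝ ≅ ℝ^{d₁+d₂+1}`,
`x ↦ (x, 0, 0)`. -/
def joinEmb₁ {d₁ d₂ : ℕ} (x : Fin d₁ → ℝ) : (Fin d₁ → ℝ) × (Fin d₂ → ℝ) × ℝ := (x, 0, 0)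

/-- Embedding of the second factor `ℝ^{d₂}` into `ℝ^{d₁} × ℝ^{d₂} × ℝ ≅ ℝ^{d₁+d₂+1}`,
`y ↦ (0, y, 1)`. -/
def joinEmb₂ {d₁ d₂ : ℕ} (y : Fin d₂ → ℝ) : (Fin d₁ → ℝ) × (Fin d₂ → ℝ) × ℝ := (0, y, 1)

/-- The free join `P₁ ⋈ P₂ ⊆ ℝ^{d₁} × ℝ^{d₂} × ℝ ≅ ℝ^{d₁+d₂+1}`:
the convex hull of `{(x,0,0) : x ∈ P₁} ∪ {(0,y,1) : y ∈ P₂}`. -/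
def freeJoin {d₁ d₂ : ℕ} (P₁ : Set (Fin d₁ → ℝ)) (P₂ : Set (Fin d₂ → ℝ)) :
    Set ((Fin d₁ → ℝ) × (Fin d₂ → ℝ) × ℝ) :=
  convexHull ℝ (joinEmb₁ '' P₁ ∪ joinEmb₂ '' P₂)

/-!
The join `Q` is the convex hull of the `2^j` cube vertices `(v, 0, 0)` and the `2j` cross-polytope
vertices `(0, ±eᵢ, 1)`.

For every sign vector `s`, the functional `∑ sᵢ yᵢ - z` is `≤ 0` on `Q` and vanishes exactly on the
facet `[0,1]^j ⋈ conv {sᵢ eᵢ}`, which contains every cube vertex. A facet-to-vertex assignment must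
therefore send these `2^j` facets injectively to the `2j` cross-polytope vertices.

Conversely, let a facet miss some cube vertex. All functionals that are constant on the facet are
proportional, because the facet has codimension one. Comparing the supporting functional with the
coordinate functionals shows that it depends only on one cube coordinate `xₖ` and on the height `z`,
so the facet is `{xₖ = ε} ⋈ (cross-polytope)`. Hence the `2^j` cube vertices can only be assigned
to `2j` facets. Both assignments are impossible since `2j < 2^j` for `j ≥ 3`.
-/

open Set Module Function

section ConvexGeometry

variable {W : Type*}

lemma convexHull_subset_halfSpace [AddCommGroup W] [Module ℝ W] {S : Set W} {l : W →ₗ[ℝ] ℝ}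
    {M : ℝ} (h : ∀ w ∈ S, l w ≤ M) : convexHull ℝ S ⊆ {x | l x ≤ M} :=
  convexHull_min h (convex_halfSpace_le l.isLinear M)

variable [NormedAddCommGroup W] [NormedSpace ℝ W]

lemma ContinuousLinearMap.toExposed_convexHull {S : Set W} (hS : S.Finite) (l : StrongDual ℝ W) :
    l.toExposed (convexHull ℝ S) = convexHull ℝ (l.toExposed S) := by
  have hF : IsExposed ℝ (convexHull ℝ S) (l.toExposed (convexHull ℝ S)) :=
    ContinuousLinearMap.toExposed.isExposed
  apply Subset.antisymm
  · -- Krein–Milman: the face is the hull of its extreme points, which are vertices in `S`.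
    have hext : (l.toExposed (convexHull ℝ S)).extremePoints ℝ ⊆ l.toExposed S := fun x hx =>
      ⟨extremePoints_convexHull_subset (hF.isExtreme.extremePoints_subset_extremePoints hx),
        fun y hy => hx.1.2 y (subset_convexHull ℝ S hy)⟩
    calc l.toExposed (convexHull ℝ S)
        = closure (convexHull ℝ ((l.toExposed (convexHull ℝ S)).extremePoints ℝ)) :=
          (closure_convexHull_extremePoints (hF.isCompact (hS.isCompact_convexHull (𝕜 := ℝ)))
            (hF.convex (convex_convexHull ℝ S))).symm
      _ ⊆ closure (convexHull ℝ (l.toExposed S)) := closure_mono (convexHull_mono hext)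
      _ = convexHull ℝ (l.toExposed S) :=
          ((hS.subset (sep_subset _ _)).isCompact_convexHull (𝕜 := ℝ)).isClosed.closure_eq
  · refine convexHull_min (fun x hx => ⟨subset_convexHull ℝ S hx.1, fun y hy => ?_⟩)
      (hF.convex (convex_convexHull ℝ S))
    exact convexHull_subset_halfSpace (l := (l : W →ₗ[ℝ] ℝ)) hx.2 hy

lemma mem_extremePoints_convexHull_of_forall_lt {S : Set W} (hS : S.Finite) (l : StrongDual ℝ W)
    {v : W} (hv : v ∈ S) (h : ∀ w ∈ S, w ≠ v → l w < l v) :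
    v ∈ (convexHull ℝ S).extremePoints ℝ := by
  have hv' : l.toExposed S = {v} := by
    refine Subset.antisymm (fun w hw => ?_) (singleton_subset_iff.2 ⟨hv, fun w hw => ?_⟩)
    · by_contra hwv
      exact (h w hw.1 hwv).not_ge (hw.2 v hv)
    · rcases eq_or_ne w v with rfl | hwv
      exacts [le_rfl, (h w hw hwv).le]
  have hexp : IsExposed ℝ (convexHull ℝ S) {v} := by
    rw [← convexHull_singleton (𝕜 := ℝ) v, ← hv', ← l.toExposed_convexHull hS]
    exact ContinuousLinearMap.toExposed.isExposed
  exact isExtreme_singleton.1 hexp.isExtreme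

end ConvexGeometry

section LinearAlgebra

variable {W : Type*} [AddCommGroup W] [Module ℝ W]

lemma vectorSpan_le_ker_of_forall_eq_s11 {S : Set W} {ψ : W →ₗ[ℝ] ℝ} {c : ℝ}
    (h : ∀ p ∈ S, ψ p = c) : vectorSpan ℝ S ≤ LinearMap.ker ψ := by
  rw [vectorSpan_def, Submodule.span_le]
  rintro _ ⟨p, hp, q, hq, rfl⟩
  simp [h p hp, h q hq]

/-- Functionals that are constant on a set of codimension one are proportional. -/
lemma ker_le_ker_of_forall_eq [FiniteDimensional ℝ W] {S : Set W}
    (hS : finrank ℝ (vectorSpan ℝ S) = finrank ℝ W - 1) {ψ φ : W →ₗ[ℝ] ℝ} (hψ : ψ ≠ 0)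
    {c d : ℝ} (hψS : ∀ p ∈ S, ψ p = c) (hφS : ∀ p ∈ S, φ p = d) :
    LinearMap.ker ψ ≤ LinearMap.ker φ := by
  have hker := Module.Dual.finrank_ker_add_one_of_ne_zero hψ
  have hspan : vectorSpan ℝ S = LinearMap.ker ψ :=
    Submodule.eq_of_le_of_finrank_eq (vectorSpan_le_ker_of_forall_eq_s11 hψS) (by omega)
  exact hspan ▸ vectorSpan_le_ker_of_forall_eq_s11 hφS

end LinearAlgebra

lemma Fintype.card_le_of_injective_of_forall_mem_range {α β γ : Type*} [Fintype α] [Fintype γ]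
    {f : α → β} (hf : Injective f) {g : γ → β} (h : ∀ a, f a ∈ range g) :
    Fintype.card α ≤ Fintype.card γ := by
  choose e he using h
  exact Fintype.card_le_of_injective e fun a b hab => hf (by rw [← he, ← he, hab])

lemma mul_two_lt_two_pow {n : ℕ} (hn : 3 ≤ n) : n * 2 < 2 ^ n := by
  induction n, hn using Nat.le_induction with
  | base => norm_num
  | succ m hm ih =>
    have : 2 ≤ 2 ^ m := Nat.le_self_pow (by omega) 2
    rw [pow_succ]
    omega

namespace CubeJoinCross

abbrev JoinSpace (j : ℕ) := (Fin j → ℝ) × (Fin j → ℝ) × ℝ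

variable {j : ℕ}

def joinFunctional (a b : Fin j → ℝ) (c : ℝ) : JoinSpace j →ₗ[ℝ] ℝ where
  toFun p := a ⬝ᵥ p.1 + b ⬝ᵥ p.2.1 + c * p.2.2
  map_add' p q := by
    simp only [Prod.fst_add, Prod.snd_add, dotProduct_add]
    ring
  map_smul' r p := by
    simp only [Prod.smul_fst, Prod.smul_snd, dotProduct_smul, smul_eq_mul, RingHom.id_apply]
    ring

lemma joinFunctional_apply (a b : Fin j → ℝ) (c : ℝ) (p : JoinSpace j) :
    joinFunctional a b c p = a ⬝ᵥ p.1 + b ⬝ᵥ p.2.1 + c * p.2.2 := rfl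

@[simp]
lemma joinFunctional_joinEmb₁ (a b : Fin j → ℝ) (c : ℝ) (x : Fin j → ℝ) :
    joinFunctional a b c (joinEmb₁ x) = a ⬝ᵥ x := by
  simp [joinEmb₁, joinFunctional_apply]

@[simp]
lemma joinFunctional_joinEmb₂ (a b : Fin j → ℝ) (c : ℝ) (y : Fin j → ℝ) :
    joinFunctional a b c (joinEmb₂ y) = b ⬝ᵥ y + c := by
  simp [joinEmb₂, joinFunctional_apply]

lemma joinFunctional_ne_zero_of_apply {a b : Fin j → ℝ} {c : ℝ} {p : JoinSpace j}
    (hp : joinFunctional a b c p ≠ 0) : joinFunctional a b c ≠ 0 :=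
  fun h => hp (by rw [h, LinearMap.zero_apply])

def cubeWeights (ℓ : JoinSpace j →ₗ[ℝ] ℝ) (i : Fin j) : ℝ := ℓ (joinEmb₁ (Pi.single i 1))

lemma apply_joinEmb₁ (ℓ : JoinSpace j →ₗ[ℝ] ℝ) (x : Fin j → ℝ) :
    ℓ (joinEmb₁ x) = cubeWeights ℓ ⬝ᵥ x := by
  calc ℓ (joinEmb₁ x) = (ℓ ∘ₗ LinearMap.inl ℝ _ _) (∑ i, x i • Pi.single i 1) := by
        rw [← pi_eq_sum_univ' x]; rfl
    _ = cubeWeights ℓ ⬝ᵥ x := by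
      simp only [map_sum, map_smul, LinearMap.comp_apply, LinearMap.inl_apply, smul_eq_mul,
        dotProduct, cubeWeights, joinEmb₁, mul_comm]
      rfl

def cubeVertices (j : ℕ) : Set (Fin j → ℝ) := {x | ∀ i, x i = 0 ∨ x i = 1}

abbrev crossVertices (j : ℕ) : Set (Fin j → ℝ) := {x | ∃ i, x = Pi.single i 1 ∨ x = -Pi.single i 1}

def joinVertices (j : ℕ) : Set (JoinSpace j) :=
  joinEmb₁ '' cubeVertices j ∪ joinEmb₂ '' crossVertices j

def cubeJoinCross (j : ℕ) : Set (JoinSpace j) := convexHull ℝ (joinVertices j)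

def cubeVertex (b : Fin j → Bool) : Fin j → ℝ := fun i => if b i then 1 else 0

/-- Signs `±1` are encoded as units of `ℤ`. -/
def crossVertex (i : Fin j) (u : ℤˣ) : Fin j → ℝ := Pi.single i (u : ℤ)

lemma cubeVertex_mem (b : Fin j → Bool) : cubeVertex b ∈ cubeVertices j := fun i => by
  cases b i <;> simp [cubeVertex]

lemma cubeVertex_injective : Injective (cubeVertex (j := j)) := fun b b' h => funext fun i => by
  have := congr_fun h i
  cases hb : b i <;> cases hb' : b' i <;> simp [cubeVertex, hb, hb'] at this ⊢

lemma zero_mem_cubeVertices : (0 : Fin j → ℝ) ∈ cubeVertices j := fun _ => Or.inl rfl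

lemma single_mem_cubeVertices (i : Fin j) : Pi.single i 1 ∈ cubeVertices j := fun k => by
  rcases eq_or_ne k i with rfl | h <;> simp [*]

lemma cubeVertices_eq_pi : cubeVertices j = univ.pi fun _ => ({0, 1} : Set ℝ) := by
  ext
  simp [cubeVertices]

lemma cubeVertices_finite : (cubeVertices j).Finite :=
  cubeVertices_eq_pi ▸ Finite.pi fun _ => toFinite _

lemma crossVertices_eq_range : crossVertices j = range (uncurry (crossVertex (j := j))) := by
  ext x
  simp only [crossVertices, crossVertex, mem_range, Prod.exists, uncurry_apply_pair]
  constructor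
  · rintro ⟨i, rfl | rfl⟩
    exacts [⟨i, 1, by simp⟩, ⟨i, -1, by simp [Pi.single_neg]⟩]
  · rintro ⟨i, u, rfl⟩
    rcases Int.units_eq_one_or u with rfl | rfl
    exacts [⟨i, Or.inl (by simp)⟩, ⟨i, Or.inr (by simp [Pi.single_neg])⟩]

lemma crossVertex_mem (i : Fin j) (u : ℤˣ) : crossVertex i u ∈ crossVertices j :=
  crossVertices_eq_range ▸ mem_range_self (f := uncurry crossVertex) (i, u)

lemma joinVertices_finite : (joinVertices j).Finite :=
  (cubeVertices_finite.image _).union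
    ((crossVertices_eq_range ▸ finite_range _ : (crossVertices j).Finite).image _)

lemma cube_eq_convexHull :
    {x : Fin j → ℝ | ∀ i, x i ∈ Icc (0 : ℝ) 1} = convexHull ℝ (cubeVertices j) := by
  rw [cubeVertices_eq_pi, convexHull_pi, convexHull_pair, segment_eq_Icc zero_le_one]
  ext
  simp [Pi.le_def, forall_and]

def joinEmb₂AffineMap (j : ℕ) : (Fin j → ℝ) →ᵃ[ℝ] JoinSpace j where
  toFun := joinEmb₂
  linear := LinearMap.inr ℝ _ _ ∘ₗ LinearMap.inl ℝ _ _
  map_vadd' y v := by simp [joinEmb₂]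

lemma freeJoin_eq_cubeJoinCross :
    freeJoin {x : Fin j → ℝ | ∀ i, x i ∈ Icc (0 : ℝ) 1} (convexHull ℝ (crossVertices j)) =
      cubeJoinCross j := by
  have h₁ : (joinEmb₁ : (Fin j → ℝ) → JoinSpace j) = (LinearMap.inl ℝ _ _).toAffineMap := rfl
  have h₂ : (joinEmb₂ : (Fin j → ℝ) → JoinSpace j) = joinEmb₂AffineMap j := rfl
  rw [freeJoin, cube_eq_convexHull, h₁, h₂, AffineMap.image_convexHull, AffineMap.image_convexHull,
    convexHull_convexHull_union_left, convexHull_convexHull_union_right]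
  rfl

lemma joinEmb₁_mem_cubeJoinCross {v : Fin j → ℝ} (hv : v ∈ cubeVertices j) :
    joinEmb₁ v ∈ cubeJoinCross j :=
  subset_convexHull ℝ _ (Or.inl ⟨v, hv, rfl⟩)

lemma joinEmb₂_mem_cubeJoinCross {y : Fin j → ℝ} (hy : y ∈ crossVertices j) :
    joinEmb₂ y ∈ cubeJoinCross j :=
  subset_convexHull ℝ _ (Or.inr ⟨y, hy, rfl⟩)

lemma zero_mem_cubeJoinCross : (0 : JoinSpace j) ∈ cubeJoinCross j :=
  joinEmb₁_mem_cubeJoinCross zero_mem_cubeVertices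

lemma dotProduct_le_of_forall {a v : Fin j → ℝ}
    (h : ∀ i, (0 < a i → v i = 1) ∧ (a i < 0 → v i = 0)) {u : Fin j → ℝ}
    (hu : u ∈ cubeVertices j) : a ⬝ᵥ u ≤ a ⬝ᵥ v := by
  refine Finset.sum_le_sum fun i _ => ?_
  rcases lt_trichotomy (a i) 0 with ha | ha | ha
  · rcases hu i with h' | h' <;> simp [h', (h i).2 ha, ha.le]
  · simp [ha]
  · rcases hu i with h' | h' <;> simp [h', (h i).1 ha, ha.le]

lemma flip_mem_cubeVertices {v : Fin j → ℝ} (hv : v ∈ cubeVertices j) (i : Fin j) :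
    v + Pi.single i (1 - 2 * v i) ∈ cubeVertices j := fun k => by
  rcases eq_or_ne k i with rfl | hki
  · rcases hv k with h | h <;> norm_num [h]
  · simpa [hki] using hv k

lemma forall_dotProduct_le_iff {a v : Fin j → ℝ} (hv : v ∈ cubeVertices j) :
    (∀ u ∈ cubeVertices j, a ⬝ᵥ u ≤ a ⬝ᵥ v) ↔ ∀ i, (0 < a i → v i = 1) ∧ (a i < 0 → v i = 0) := by
  refine ⟨fun h i => ?_, fun h u hu => dotProduct_le_of_forall h hu⟩
  have hflip := h _ (flip_mem_cubeVertices hv i)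
  rw [dotProduct_add, dotProduct_single] at hflip
  rcases hv i with hvi | hvi <;> rw [hvi] at hflip
  · exact ⟨fun ha => by linarith, fun _ => hvi⟩
  · exact ⟨fun _ => hvi, fun ha => by linarith⟩

lemma cubeCoord_mul_le {u v : ℝ} (hu : u = 0 ∨ u = 1) (hv : v = 0 ∨ v = 1) :
    (2 * v - 1) * u ≤ (2 * v - 1) * v ∧ (u ≠ v → (2 * v - 1) * u < (2 * v - 1) * v) := by
  rcases hu with rfl | rfl <;> rcases hv with rfl | rfl <;> norm_num

lemma joinEmb₁_mem_extremePoints {v : Fin j → ℝ} (hv : v ∈ cubeVertices j) :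
    joinEmb₁ v ∈ (cubeJoinCross j).extremePoints ℝ := by
  set a : Fin j → ℝ := fun i => 2 * v i - 1
  have hlt : ∀ u ∈ cubeVertices j, u ≠ v → a ⬝ᵥ u < a ⬝ᵥ v := by
    intro u hu huv
    obtain ⟨i, hi⟩ := Function.ne_iff.1 huv
    exact Finset.sum_lt_sum (fun k _ => (cubeCoord_mul_le (hu k) (hv k)).1)
      ⟨i, Finset.mem_univ _, (cubeCoord_mul_le (hu i) (hv i)).2 hi⟩
  have hnonneg : 0 ≤ a ⬝ᵥ v :=
    Finset.sum_nonneg fun k _ => by rcases hv k with h | h <;> norm_num [a, h]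
  refine mem_extremePoints_convexHull_of_forall_lt joinVertices_finite
    (joinFunctional a 0 (-1)).toContinuousLinearMap (Or.inl ⟨v, hv, rfl⟩) ?_
  rintro _ (⟨u, hu, rfl⟩ | ⟨y, -, rfl⟩) hne
  · simpa using hlt u hu (by rintro rfl; exact hne rfl)
  · simpa using hnonneg.trans_lt' (by norm_num)

lemma units_int_mul_self (u : ℤˣ) : ((u : ℤ) : ℝ) * (u : ℤ) = 1 := by
  rcases Int.units_eq_one_or u with rfl | rfl <;> norm_num

lemma eq_of_units_int_mul_eq_one {u w : ℤˣ} (h : ((w : ℤ) : ℝ) * (u : ℤ) = 1) : u = w := by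
  have : ((u : ℤ) : ℝ) = (w : ℤ) :=
    calc ((u : ℤ) : ℝ) = (w : ℤ) * (w : ℤ) * (u : ℤ) := by rw [units_int_mul_self, one_mul]
      _ = (w : ℤ) := by rw [mul_assoc, h, mul_one]
  exact Units.ext (Int.cast_injective this)

def crossFacetFunctional (s : Fin j → ℤˣ) : JoinSpace j →ₗ[ℝ] ℝ :=
  joinFunctional 0 (fun i => (s i : ℤ)) (-1)

/-- The facet `[0,1]^j ⋈ conv {sᵢ eᵢ}` of the join. -/
def crossFacet (s : Fin j → ℤˣ) : Set (JoinSpace j) :=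
  (crossFacetFunctional s).toContinuousLinearMap.toExposed (cubeJoinCross j)

lemma crossFacetFunctional_joinEmb₂_crossVertex (s : Fin j → ℤˣ) (i : Fin j) (u : ℤˣ) :
    crossFacetFunctional s (joinEmb₂ (crossVertex i u)) = ((s i : ℤ) : ℝ) * (u : ℤ) - 1 := by
  simp [crossFacetFunctional, crossVertex, sub_eq_add_neg]

lemma crossFacetFunctional_nonpos (s : Fin j → ℤˣ) {p : JoinSpace j}
    (hp : p ∈ cubeJoinCross j) : crossFacetFunctional s p ≤ 0 := by
  refine convexHull_subset_halfSpace ?_ hp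
  rintro _ (⟨v, -, rfl⟩ | ⟨y, hy, rfl⟩)
  · simp [crossFacetFunctional]
  · obtain ⟨⟨i, u⟩, rfl⟩ := crossVertices_eq_range ▸ hy
    rw [uncurry_apply_pair, crossFacetFunctional_joinEmb₂_crossVertex]
    rcases Int.units_eq_one_or (s i) with h | h <;>
      rcases Int.units_eq_one_or u with rfl | rfl <;> norm_num [h]

lemma mem_crossFacet_iff {s : Fin j → ℤˣ} {p : JoinSpace j} :
    p ∈ crossFacet s ↔ p ∈ cubeJoinCross j ∧ crossFacetFunctional s p = 0 := by
  refine ⟨fun hp => ⟨hp.1, (crossFacetFunctional_nonpos s hp.1).antisymm ?_⟩,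
    fun hp => ⟨hp.1, fun q hq => ?_⟩⟩
  · simpa using hp.2 0 zero_mem_cubeJoinCross
  · simpa [hp.2] using crossFacetFunctional_nonpos s hq

lemma joinEmb₁_mem_crossFacet (s : Fin j → ℤˣ) {v : Fin j → ℝ} (hv : v ∈ cubeVertices j) :
    joinEmb₁ v ∈ crossFacet s :=
  mem_crossFacet_iff.2 ⟨joinEmb₁_mem_cubeJoinCross hv, by simp [crossFacetFunctional]⟩

lemma joinEmb₂_crossVertex_mem_crossFacet (s : Fin j → ℤˣ) (i : Fin j) :
    joinEmb₂ (crossVertex i (s i)) ∈ crossFacet s :=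
  mem_crossFacet_iff.2 ⟨joinEmb₂_mem_cubeJoinCross (crossVertex_mem i (s i)),
    by rw [crossFacetFunctional_joinEmb₂_crossVertex, units_int_mul_self, sub_self]⟩

lemma crossFacet_injective : Injective (crossFacet (j := j)) := by
  intro s s' h
  funext i
  have := (mem_crossFacet_iff.1 (h ▸ joinEmb₂_crossVertex_mem_crossFacet s i)).2
  rw [crossFacetFunctional_joinEmb₂_crossVertex, sub_eq_zero] at this
  exact eq_of_units_int_mul_eq_one this

lemma crossFacetFunctional_ne_zero (s : Fin j → ℤˣ) : crossFacetFunctional s ≠ 0 :=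
  joinFunctional_ne_zero_of_apply (p := joinEmb₂ 0) (by simp)

lemma vectorSpan_crossFacet (s : Fin j → ℤˣ) :
    vectorSpan ℝ (crossFacet s) = LinearMap.ker (crossFacetFunctional s) := by
  refine le_antisymm (vectorSpan_le_ker_of_forall_eq_s11 fun p hp => (mem_crossFacet_iff.1 hp).2) ?_
  have h0 : (0 : JoinSpace j) ∈ crossFacet s := joinEmb₁_mem_crossFacet s zero_mem_cubeVertices
  rw [vectorSpan_eq_span_vsub_set_right ℝ h0]
  simp only [vsub_eq_sub, sub_zero, image_id']
  intro p hp
  -- `p = ∑ xᵢ (eᵢ, 0, 0) + ∑ sᵢ yᵢ (0, sᵢ eᵢ, 1)`, using `z = ∑ sᵢ yᵢ` on the kernel.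
  have hdecomp : p = ∑ i, p.1 i • joinEmb₁ (Pi.single i 1) +
      ∑ i, (((s i : ℤ) : ℝ) * p.2.1 i) • joinEmb₂ (crossVertex i (s i)) := by
    have hz : p.2.2 = ∑ i, ((s i : ℤ) : ℝ) * p.2.1 i := by
      have := LinearMap.mem_ker.1 hp
      simp [crossFacetFunctional, joinFunctional_apply, dotProduct] at this
      linarith
    ext k
    · simp [joinEmb₁, joinEmb₂, Prod.fst_sum, Finset.sum_apply, Pi.single_apply]
    · simp [joinEmb₁, joinEmb₂, crossVertex, Prod.fst_sum, Prod.snd_sum, Finset.sum_apply,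
        Pi.single_apply, mul_right_comm _ (p.2.1 k), units_int_mul_self]
    · simp [joinEmb₁, joinEmb₂, Prod.snd_sum, hz]
  rw [hdecomp]
  refine add_mem (Submodule.sum_mem _ fun i _ => Submodule.smul_mem _ _ (Submodule.subset_span ?_))
    (Submodule.sum_mem _ fun i _ => Submodule.smul_mem _ _ (Submodule.subset_span ?_))
  exacts [joinEmb₁_mem_crossFacet s (single_mem_cubeVertices i),
    joinEmb₂_crossVertex_mem_crossFacet s i]

lemma crossFacetFunctional_joinEmb₂_neg (s : Fin j → ℤˣ) (i : Fin j) :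
    crossFacetFunctional s (joinEmb₂ (crossVertex i (-s i))) = -2 := by
  rw [crossFacetFunctional_joinEmb₂_crossVertex, Units.val_neg, Int.cast_neg, mul_neg,
    units_int_mul_self]
  norm_num

lemma crossFacet_ne_cubeJoinCross (hj : 0 < j) (s : Fin j → ℤˣ) :
    crossFacet s ≠ cubeJoinCross j := fun h => by
  have hq := joinEmb₂_mem_cubeJoinCross (crossVertex_mem ⟨0, hj⟩ (-s ⟨0, hj⟩))
  rw [← h, mem_crossFacet_iff, crossFacetFunctional_joinEmb₂_neg] at hq
  norm_num at hq

lemma crossFacet_mem_ambientFacets (hj : 0 < j) (s : Fin j → ℤˣ) :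
    crossFacet s ∈ ambientFacets (cubeJoinCross j) := by
  refine ⟨⟨ContinuousLinearMap.toExposed.isExposed,
    ⟨0, joinEmb₁_mem_crossFacet s zero_mem_cubeVertices⟩, crossFacet_ne_cubeJoinCross hj s⟩, ?_⟩
  have := Module.Dual.finrank_ker_add_one_of_ne_zero (crossFacetFunctional_ne_zero s)
  rw [polyDim, direction_affineSpan, vectorSpan_crossFacet]
  omega

/-- The span contains the hyperplane spanned by a facet and a point off that hyperplane. -/
lemma vectorSpan_cubeJoinCross (hj : 0 < j) : vectorSpan ℝ (cubeJoinCross j) = ⊤ := by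
  set s : Fin j → ℤˣ := 1
  set q := joinEmb₂ (crossVertex ⟨0, hj⟩ (-s ⟨0, hj⟩))
  have hq : q ∈ vectorSpan ℝ (cubeJoinCross j) := by
    simpa using vsub_mem_vectorSpan ℝ (joinEmb₂_mem_cubeJoinCross (crossVertex_mem _ _))
      zero_mem_cubeJoinCross
  refine (LinearMap.isCoatom_ker_of_surjective
    (LinearMap.surjective (crossFacetFunctional_ne_zero s))).2 _ (lt_of_le_of_ne ?_ ?_)
  · rw [← vectorSpan_crossFacet]
    exact vectorSpan_mono ℝ (sep_subset _ _)
  · rintro h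
    rw [← h, LinearMap.mem_ker, crossFacetFunctional_joinEmb₂_neg] at hq
    norm_num at hq

lemma affineSpan_cubeJoinCross (hj : 0 < j) : affineSpan ℝ (cubeJoinCross j) = ⊤ :=
  (AffineSubspace.affineSpan_eq_top_iff_vectorSpan_eq_top_of_nonempty ℝ _ _
    ⟨0, zero_mem_cubeJoinCross⟩).2 (vectorSpan_cubeJoinCross hj)

def levelVertices (ℓ : JoinSpace j →ₗ[ℝ] ℝ) (M : ℝ) : Set (JoinSpace j) :=
  {w ∈ joinVertices j | ℓ w = M}

structure SupportsFacet (ℓ : JoinSpace j →ₗ[ℝ] ℝ) (M : ℝ) : Prop where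
  le : ∀ w ∈ joinVertices j, ℓ w ≤ M
  finrank_vectorSpan : finrank ℝ (vectorSpan ℝ (levelVertices ℓ M)) = finrank ℝ (JoinSpace j) - 1

def cubeFacetJoinVertices (k : Fin j) (ε : Bool) : Set (JoinSpace j) :=
  joinEmb₁ '' {v ∈ cubeVertices j | v k = if ε then 1 else 0} ∪ joinEmb₂ '' crossVertices j

namespace SupportsFacet

variable {ℓ : JoinSpace j →ₗ[ℝ] ℝ} {M : ℝ}

lemma ker_le_ker (h : SupportsFacet ℓ M) {ψ φ : JoinSpace j →ₗ[ℝ] ℝ} (hψ : ψ ≠ 0) {c d : ℝ}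
    (hψS : ∀ p ∈ levelVertices ℓ M, ψ p = c) (hφS : ∀ p ∈ levelVertices ℓ M, φ p = d)
    {p : JoinSpace j} (hp : ψ p = 0) : φ p = 0 :=
  ker_le_ker_of_forall_eq h.finrank_vectorSpan hψ hψS hφS hp

lemma exists_cube_mem (h : SupportsFacet ℓ M) (hj : 0 < j) :
    ∃ u ∈ cubeVertices j, ℓ (joinEmb₁ u) = M := by
  by_contra! hM
  have hz : ∀ p ∈ levelVertices ℓ M, joinFunctional 0 0 1 p = 1 := by
    rintro _ ⟨⟨u, hu, rfl⟩ | ⟨y, -, rfl⟩, hp⟩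
    exacts [absurd hp (hM u hu), by simp]
  have hx : ∀ p ∈ levelVertices ℓ M, joinFunctional (Pi.single ⟨0, hj⟩ 1) 0 0 p = 0 := by
    rintro _ ⟨⟨u, hu, rfl⟩ | ⟨y, -, rfl⟩, hp⟩
    exacts [absurd hp (hM u hu), by simp]
  simpa using h.ker_le_ker (joinFunctional_ne_zero_of_apply (p := joinEmb₂ 0) (by simp)) hz hx
    (p := joinEmb₁ (Pi.single ⟨0, hj⟩ 1)) (by simp)

lemma exists_cross_mem (h : SupportsFacet ℓ M) (hj : 0 < j) :
    ∃ y ∈ crossVertices j, ℓ (joinEmb₂ y) = M := by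
  by_contra! hM
  have hz : ∀ p ∈ levelVertices ℓ M, joinFunctional 0 0 1 p = 0 := by
    rintro _ ⟨⟨u, -, rfl⟩ | ⟨y, hy, rfl⟩, hp⟩
    exacts [by simp, absurd hp (hM y hy)]
  have hy : ∀ p ∈ levelVertices ℓ M, joinFunctional 0 (Pi.single ⟨0, hj⟩ 1) 0 p = 0 := by
    rintro _ ⟨⟨u, -, rfl⟩ | ⟨y, hy, rfl⟩, hp⟩
    exacts [by simp, absurd hp (hM y hy)]
  simpa [joinFunctional_apply] using
    h.ker_le_ker (joinFunctional_ne_zero_of_apply (p := joinEmb₂ 0) (by simp)) hz hy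
      (p := ((0 : Fin j → ℝ), Pi.single ⟨0, hj⟩ 1, 0)) (by simp [joinFunctional_apply])

lemma apply_joinEmb₁_eq_iff (h : SupportsFacet ℓ M) (hj : 0 < j) {v : Fin j → ℝ}
    (hv : v ∈ cubeVertices j) : ℓ (joinEmb₁ v) = M ↔
      ∀ i, (0 < cubeWeights ℓ i → v i = 1) ∧ (cubeWeights ℓ i < 0 → v i = 0) := by
  obtain ⟨u₀, hu₀, hu₀M⟩ := h.exists_cube_mem hj
  rw [← forall_dotProduct_le_iff hv]
  simp only [← apply_joinEmb₁]
  exact ⟨fun hvM u hu => hvM ▸ h.le _ (Or.inl ⟨u, hu, rfl⟩),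
    fun hvM => (h.le _ (Or.inl ⟨v, hv, rfl⟩)).antisymm (hu₀M ▸ hvM u₀ hu₀)⟩

lemma coord_eq_of_apply_eq (h : SupportsFacet ℓ M) (hj : 0 < j) {k : Fin j}
    (hk : cubeWeights ℓ k ≠ 0) {v : Fin j → ℝ} (hv : v ∈ cubeVertices j)
    (hvM : ℓ (joinEmb₁ v) = M) : v k = if 0 < cubeWeights ℓ k then 1 else 0 := by
  have hvk := (h.apply_joinEmb₁_eq_iff hj hv).1 hvM k
  rcases hk.lt_or_gt with hneg | hpos
  · simp [hneg.not_gt, hvk.2 hneg]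
  · simp [hpos, hvk.1 hpos]

lemma cubeCoord_eq (h : SupportsFacet ℓ M) (hj : 0 < j) {k : Fin j} (hk : cubeWeights ℓ k ≠ 0) :
    ∀ p ∈ levelVertices ℓ M, joinFunctional (Pi.single k 1) 0
      (if 0 < cubeWeights ℓ k then 1 else 0) p = if 0 < cubeWeights ℓ k then 1 else 0 := by
  rintro _ ⟨⟨u, hu, rfl⟩ | ⟨y, -, rfl⟩, hp⟩
  · simpa using h.coord_eq_of_apply_eq hj hk hu hp
  · simp

lemma cubeCoord_ne_zero (k : Fin j) (θ : ℝ) : joinFunctional (Pi.single k 1) 0 θ ≠ 0 :=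
  joinFunctional_ne_zero_of_apply (p := joinEmb₁ (Pi.single k 1)) (by simp)

lemma cubeWeights_eq_zero (h : SupportsFacet ℓ M) (hj : 0 < j) {k l : Fin j}
    (hk : cubeWeights ℓ k ≠ 0) (hl : l ≠ k) : cubeWeights ℓ l = 0 := by
  by_contra hl0
  simpa using h.ker_le_ker (cubeCoord_ne_zero k _) (h.cubeCoord_eq hj hk) (h.cubeCoord_eq hj hl0)
    (p := joinEmb₁ (Pi.single l 1)) (by simp [Pi.single_eq_of_ne hl])

lemma apply_joinEmb₂ (h : SupportsFacet ℓ M) (hj : 0 < j) {k : Fin j}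
    (hk : cubeWeights ℓ k ≠ 0) (y : Fin j → ℝ) : ℓ (joinEmb₂ y) = M := by
  have hχ : ∀ p ∈ levelVertices ℓ M, (ℓ - joinFunctional (cubeWeights ℓ) 0 M) p = 0 := by
    rintro _ ⟨⟨u, -, rfl⟩ | ⟨y, -, rfl⟩, hp⟩
    · rw [LinearMap.sub_apply, apply_joinEmb₁ ℓ, joinFunctional_joinEmb₁, sub_self]
    · simp [hp]
  have hflat : ∀ y, ℓ ((0 : Fin j → ℝ), y, 0) = 0 := fun y => by
    simpa [joinFunctional_apply] using h.ker_le_ker (cubeCoord_ne_zero k _)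
      (h.cubeCoord_eq hj hk) hχ (p := (0, y, 0)) (by simp [joinFunctional_apply])
  have hconst : ∀ y, ℓ (joinEmb₂ y) = ℓ (joinEmb₂ 0) := fun y => by
    have : joinEmb₂ y = ((0 : Fin j → ℝ), y, 0) + joinEmb₂ 0 := by simp [joinEmb₂]
    rw [this, map_add, hflat, zero_add]
  obtain ⟨y₀, -, hy₀⟩ := h.exists_cross_mem hj
  rw [hconst, ← hy₀, hconst y₀]

lemma exists_levelVertices_eq (h : SupportsFacet ℓ M) (hj : 0 < j)
    (hmiss : ∃ v ∈ cubeVertices j, ℓ (joinEmb₁ v) ≠ M) :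
    ∃ k ε, levelVertices ℓ M = cubeFacetJoinVertices k ε := by
  obtain ⟨v₀, hv₀, hv₀M⟩ := hmiss
  obtain ⟨k, hk⟩ : ∃ k, cubeWeights ℓ k ≠ 0 := by
    by_contra! ha
    exact hv₀M ((h.apply_joinEmb₁_eq_iff hj hv₀).2 fun i => by simp [ha i])
  refine ⟨k, decide (0 < cubeWeights ℓ k), Set.ext fun p => ⟨?_, ?_⟩⟩
  · rintro ⟨⟨u, hu, rfl⟩ | ⟨y, hy, rfl⟩, hp⟩
    · exact Or.inl ⟨u, ⟨hu, by simpa using h.coord_eq_of_apply_eq hj hk hu hp⟩, rfl⟩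
    · exact Or.inr ⟨y, hy, rfl⟩
  · rintro (⟨u, ⟨hu, huk⟩, rfl⟩ | ⟨y, hy, rfl⟩)
    · refine ⟨Or.inl ⟨u, hu, rfl⟩, (h.apply_joinEmb₁_eq_iff hj hu).2 fun i => ?_⟩
      rcases eq_or_ne i k with rfl | hik
      · rcases hk.lt_or_gt with hneg | hpos
        · simpa [hneg, hneg.not_gt] using huk
        · simpa [hpos, hpos.not_gt] using huk
      · simp [h.cubeWeights_eq_zero hj hk hik]
    · exact ⟨Or.inr ⟨y, hy, rfl⟩, h.apply_joinEmb₂ hj hk y⟩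

end SupportsFacet

lemma exists_eq_convexHull_cubeFacetJoinVertices (hj : 0 < j) {F : Set (JoinSpace j)}
    (hF : F ∈ ambientFacets (cubeJoinCross j)) {v₀ : Fin j → ℝ} (hv₀ : v₀ ∈ cubeVertices j)
    (hF₀ : joinEmb₁ v₀ ∉ F) : ∃ k ε, F = convexHull ℝ (cubeFacetJoinVertices k ε) := by
  obtain ⟨⟨hexp, hne, -⟩, hdim⟩ := hF
  obtain ⟨l, hl⟩ := hexp hne
  replace hl : F = convexHull ℝ (l.toExposed (joinVertices j)) :=
    hl.trans (l.toExposed_convexHull joinVertices_finite)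
  subst hl
  obtain ⟨w₀, hw₀⟩ := convexHull_nonempty_iff.1 hne
  have hS : l.toExposed (joinVertices j) = levelVertices (l : JoinSpace j →ₗ[ℝ] ℝ) (l w₀) :=
    Set.ext fun w => ⟨fun hw => ⟨hw.1, le_antisymm (hw₀.2 w hw.1) (hw.2 w₀ hw₀.1)⟩,
      fun hw => ⟨hw.1, fun y hy => hw.2 ▸ hw₀.2 y hy⟩⟩
  rw [hS] at hdim hF₀ ⊢
  rw [polyDim, affineSpan_convexHull, direction_affineSpan] at hdim
  obtain ⟨k, ε, hkε⟩ := SupportsFacet.exists_levelVertices_eq ⟨fun w hw => hw₀.2 w hw, hdim⟩ hj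
    ⟨v₀, hv₀, fun h => hF₀ (subset_convexHull ℝ _ ⟨Or.inl ⟨v₀, hv₀, rfl⟩, h⟩)⟩
  exact ⟨k, ε, hkε ▸ rfl⟩

lemma not_exists_injective_vertex_to_facet (hj : 3 ≤ j) :
    ¬ ∃ f : (cubeJoinCross j).extremePoints ℝ → ambientFacets (cubeJoinCross j),
      Injective f ∧ ∀ v, (v : JoinSpace j) ∉ (f v : Set (JoinSpace j)) := by
  rintro ⟨f, hf, hmiss⟩
  let v (b : Fin j → Bool) : (cubeJoinCross j).extremePoints ℝ :=
    ⟨joinEmb₁ (cubeVertex b), joinEmb₁_mem_extremePoints (cubeVertex_mem b)⟩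
  have hv : Injective v := fun b b' h =>
    cubeVertex_injective (congrArg Prod.fst (congrArg Subtype.val h))
  have hcard := Fintype.card_le_of_injective_of_forall_mem_range
    (f := fun b => (f (v b) : Set (JoinSpace j))) (Subtype.val_injective.comp (hf.comp hv))
    (g := fun p : Fin j × Bool => convexHull ℝ (cubeFacetJoinVertices p.1 p.2)) fun b => by
      obtain ⟨k, ε, h⟩ := exists_eq_convexHull_cubeFacetJoinVertices (by omega) (f (v b)).2
        (cubeVertex_mem b) (hmiss (v b))
      exact ⟨(k, ε), h.symm⟩
  simp only [Fintype.card_pi, Fintype.card_bool, Finset.prod_const, Finset.card_univ,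
    Fintype.card_fin, Fintype.card_prod] at hcard
  exact (mul_two_lt_two_pow hj).not_ge hcard

lemma not_exists_injective_facet_to_vertex (hj : 3 ≤ j) :
    ¬ ∃ g : ambientFacets (cubeJoinCross j) → (cubeJoinCross j).extremePoints ℝ,
      Injective g ∧
        ∀ F : ambientFacets (cubeJoinCross j), (g F : JoinSpace j) ∉ (F : Set (JoinSpace j)) := by
  rintro ⟨g, hg, hmiss⟩
  let F (s : Fin j → ℤˣ) : ambientFacets (cubeJoinCross j) :=
    ⟨crossFacet s, crossFacet_mem_ambientFacets (by omega) s⟩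
  have hF : Injective F := fun s s' h => crossFacet_injective (congrArg Subtype.val h)
  have hcard := Fintype.card_le_of_injective_of_forall_mem_range
    (f := fun s => (g (F s) : JoinSpace j)) (Subtype.val_injective.comp (hg.comp hF))
    (g := fun p : Fin j × ℤˣ => joinEmb₂ (crossVertex p.1 p.2)) fun s => by
      rcases extremePoints_convexHull_subset (g (F s)).2 with ⟨u, hu, hgu⟩ | ⟨y, hy, hgy⟩
      · exact absurd (hgu ▸ joinEmb₁_mem_crossFacet s hu) (hmiss (F s))
      · obtain ⟨p, rfl⟩ := crossVertices_eq_range ▸ hy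
        exact ⟨p, hgy⟩
  simp only [Fintype.card_pi, Fintype.card_units_int, Finset.prod_const, Finset.card_univ,
    Fintype.card_fin, Fintype.card_prod] at hcard
  exact (mul_two_lt_two_pow hj).not_ge hcard

lemma not_hasVFA (hj : 3 ≤ j) : ¬ HasVFA (cubeJoinCross j) :=
  not_or.2 ⟨not_exists_injective_vertex_to_facet hj, not_exists_injective_facet_to_vertex hj⟩

end CubeJoinCross

/-- For `j ≥ 3`, the free join of the `j`-cube `[0,1]^j` and the
`j`-dimensional cross-polytope is a full-dimensional polytope in `ℝ^{2j+1}` without a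
vertex-facet assignment. -/
theorem cube_join_crosspolytope_no_vfa (j : ℕ) (hj : 3 ≤ j) :
    IsPolytope (freeJoin {x : Fin j → ℝ | ∀ i, x i ∈ Set.Icc (0 : ℝ) 1}
        (convexHull ℝ {x : Fin j → ℝ | ∃ i, x = Pi.single i 1 ∨ x = -Pi.single i 1})) ∧
    affineSpan ℝ (freeJoin {x : Fin j → ℝ | ∀ i, x i ∈ Set.Icc (0 : ℝ) 1}
        (convexHull ℝ {x : Fin j → ℝ | ∃ i, x = Pi.single i 1 ∨ x = -Pi.single i 1})) = ⊤ ∧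
    ¬ HasVFA (freeJoin {x : Fin j → ℝ | ∀ i, x i ∈ Set.Icc (0 : ℝ) 1}
        (convexHull ℝ {x : Fin j → ℝ | ∃ i, x = Pi.single i 1 ∨ x = -Pi.single i 1})) := by
  rw [CubeJoinCross.freeJoin_eq_cubeJoinCross]
  exact ⟨⟨_, CubeJoinCross.joinVertices_finite, rfl⟩,
    CubeJoinCross.affineSpan_cubeJoinCross (by omega), CubeJoinCross.not_hasVFA hj⟩
end

section
/- Let P ⊆ ℝ^d be a full-dimensional polytope with f_0(P) ≥ f_{d−1}(P), and suppose P has a vertex-facet assignment. Then for every face σ of P, f_0(σ) + k ≤ f_0(P), where f_0(σ) is the number of vertices of σ and k is the number of facets of P containing σ. -/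
/-! Let `A` be the vertices of `σ` and `K` the facets containing `σ`; every vertex of `A` lies
in every facet of `K`. A vertex-to-facet assignment therefore sends `A` injectively into the
facets outside `K`, so `|A| + |K| ≤ f_{d-1}(P) ≤ f_0(P)`; a facet-to-vertex assignment sends `K`
injectively into the vertices outside `A`, so `|A| + |K| ≤ f_0(P)` directly. -/

open Set Function

section Counting

variable {α β : Type*}

theorem Set.ncard_add_ncard_le_of_injective_sdiff {s t : Set α} {u : Set β} (hs : s.Finite)
    (hts : t ⊆ s) (f : u → ↥(s \ t)) (hf : Injective f) : t.ncard + u.ncard ≤ s.ncard := by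
  have : Finite ↥(s \ t) := hs.sdiff.to_subtype
  calc t.ncard + u.ncard ≤ t.ncard + (s \ t).ncard := by
        gcongr; exact Nat.card_le_card_of_injective f hf
    _ = s.ncard := by rw [add_comm, ncard_sdiff_add_ncard_of_subset hts hs]

variable {E A : Set α} {𝓕 K : Set (Set α)}

theorem ncard_add_ncard_le_of_injective_notMem_image (h𝓕 : 𝓕.Finite) (hAE : A ⊆ E)
    (hK𝓕 : K ⊆ 𝓕) (hinc : ∀ v ∈ A, ∀ F ∈ K, v ∈ F) (f : E → 𝓕) (hf : Injective f)
    (hfv : ∀ v, (v : α) ∉ (f v : Set α)) : A.ncard + K.ncard ≤ 𝓕.ncard := by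
  rw [add_comm]
  exact ncard_add_ncard_le_of_injective_sdiff h𝓕 hK𝓕
    (fun v => ⟨f ⟨v, hAE v.2⟩, (f _).2, fun hK => hfv _ (hinc v v.2 _ hK)⟩)
    fun _ _ hvw => Subtype.ext (Subtype.mk.inj (hf (Subtype.ext (Subtype.mk.inj hvw))))

theorem ncard_add_ncard_le_of_injective_image_notMem (hE : E.Finite) (hAE : A ⊆ E)
    (hK𝓕 : K ⊆ 𝓕) (hinc : ∀ v ∈ A, ∀ F ∈ K, v ∈ F) (g : 𝓕 → E) (hg : Injective g)
    (hgF : ∀ F : 𝓕, (g F : α) ∉ (F : Set α)) : A.ncard + K.ncard ≤ E.ncard :=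
  ncard_add_ncard_le_of_injective_sdiff hE hAE
    (fun F => ⟨g ⟨F, hK𝓕 F.2⟩, (g _).2, fun hA => hgF ⟨F, hK𝓕 F.2⟩ (hinc _ hA F F.2)⟩)
    fun _ _ hFG => Subtype.ext (Subtype.mk.inj (hg (Subtype.ext (Subtype.mk.inj hFG))))

end Counting

namespace IsPolytope

variable {V : Type*} [NormedAddCommGroup V] [NormedSpace ℝ V] {P : Set V}

theorem extremePoints_finite (hP : IsPolytope P) : (P.extremePoints ℝ).Finite := by
  obtain ⟨S, hS, rfl⟩ := hP
  exact hS.subset extremePoints_convexHull_subset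

theorem eq_convexHull_extremePoints_of_isExposed (hP : IsPolytope P) {F : Set V}
    (hF : IsExposed ℝ P F) : F = convexHull ℝ (F.extremePoints ℝ) := by
  obtain ⟨S, hS, rfl⟩ := hP
  have hPc : IsCompact (convexHull ℝ S) := hS.isCompact_convexHull ℝ
  have hFc : IsCompact F := hPc.of_isClosed_subset (hF.isClosed hPc.isClosed) hF.subset
  have hFfin : (F.extremePoints ℝ).Finite :=
    (extremePoints_finite ⟨S, hS, rfl⟩).subset hF.isExtreme.extremePoints_subset_extremePoints
  have h := closure_convexHull_extremePoints hFc (hF.convex (convex_convexHull ℝ S))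
  rwa [(hFfin.isClosed_convexHull ℝ).closure_eq, eq_comm] at h

-- An exposed face is the convex hull of its vertices, which are vertices of `P`.
theorem finite_setOf_isExposed (hP : IsPolytope P) : {F | IsExposed ℝ P F}.Finite := by
  refine Finite.of_finite_image (f := fun F => F.extremePoints ℝ) ?_ ?_
  · refine hP.extremePoints_finite.finite_subsets.subset ?_
    rintro _ ⟨F, hF, rfl⟩
    exact hF.isExtreme.extremePoints_subset_extremePoints
  · intro F hF G hG hFG
    rw [hP.eq_convexHull_extremePoints_of_isExposed hF,
      hP.eq_convexHull_extremePoints_of_isExposed hG]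
    exact congrArg _ hFG

end IsPolytope

theorem face_estimate_of_vfa_general {d : ℕ} (P : Set (Fin d → ℝ))
    (hP : IsPolytope P)
    (hcard : (ambientFacets P).ncard ≤ (P.extremePoints ℝ).ncard)
    (hvfa : HasVFA P) (σ : Set (Fin d → ℝ)) (hσ : IsFaceOf P σ) :
    (σ.extremePoints ℝ).ncard + {F ∈ ambientFacets P | σ ⊆ F}.ncard ≤
      (P.extremePoints ℝ).ncard := by
  have hAE : σ.extremePoints ℝ ⊆ P.extremePoints ℝ :=
    hσ.1.isExtreme.extremePoints_subset_extremePoints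
  have hK𝓕 : {F ∈ ambientFacets P | σ ⊆ F} ⊆ ambientFacets P := sep_subset _ _
  have hinc : ∀ v ∈ σ.extremePoints ℝ, ∀ F ∈ {F ∈ ambientFacets P | σ ⊆ F}, v ∈ F :=
    fun v hv F hF => hF.2 hv.1
  rcases hvfa with ⟨f, hf, hfv⟩ | ⟨g, hg, hgF⟩
  · have h𝓕 : (ambientFacets P).Finite :=
      hP.finite_setOf_isExposed.subset fun F hF => hF.1.1
    exact (ncard_add_ncard_le_of_injective_notMem_image h𝓕 hAE hK𝓕 hinc f hf hfv).trans hcard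
  · exact ncard_add_ncard_le_of_injective_image_notMem hP.extremePoints_finite hAE hK𝓕 hinc
      g hg hgF

/-- If `P` has at least as many vertices as facets and a vertex-facet
assignment, then for every face `σ` of `P`, the number of vertices of `σ` plus the number
of facets of `P` containing `σ` is at most `f₀(P)`. -/
theorem face_estimate_of_vfa {d : ℕ} (P : Set (Fin d → ℝ))
    (hP : IsPolytope P) (hfull : affineSpan ℝ P = ⊤)
    (hcard : (ambientFacets P).ncard ≤ (P.extremePoints ℝ).ncard)
    (hvfa : HasVFA P) (σ : Set (Fin d → ℝ)) (hσ : IsFaceOf P σ) :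
    (σ.extremePoints ℝ).ncard + {F ∈ ambientFacets P | σ ⊆ F}.ncard ≤
      (P.extremePoints ℝ).ncard :=
  face_estimate_of_vfa_general P hP hcard hvfa σ hσ
end
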